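/- arXiv:1508.05494 — 5 statements merged into one kernel-verified Lean document; each statement's English description precedes it below -/
import Mathlib

section
/- Let q : I → ℝ⁴ and l : I → ℝ be differentiable on an interval I, let δ : I → ℝ be any function and suppose l(t) ≠ 0 for all t ∈ I. If q satisfies the quaternion kite equations of motion q̇(t) = Φ(q(t)) (with parameters E, v_w, g_k, steering δ(t), tether length l(t) and winch speed l̇(t)), then the Euclidean norm ‖q(t)‖ is constant on I. -/
/-!
`‖q‖²` has derivative `2⟪q, Φ(q)⟫` along a solution, and `Φ(q) ⟂ q` for every `q`, so `‖q‖²`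
has zero derivative on the convex set `I` and is therefore constant there.
-/

noncomputable def kitePhi (E vw gk δ l ldot : ℝ) (q : EuclideanSpace ℝ (Fin 4)) :
    EuclideanSpace ℝ (Fin 4) :=
  let va := E * vw * (q 0 ^ 2 + q 1 ^ 2 - q 2 ^ 2 - q 3 ^ 2) - E * ldot
  (va / (2 * l)) • (WithLp.toLp 2 ![-(q 2), -(q 3), q 0, q 1] : EuclideanSpace ℝ (Fin 4))
    + (vw / l) • (WithLp.toLp 2 ![q 0 * (q 2 ^ 2 + q 3 ^ 2), q 1 * (q 2 ^ 2 + q 3 ^ 2),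
        -(q 2) * (q 0 ^ 2 + q 1 ^ 2), -(q 3) * (q 0 ^ 2 + q 1 ^ 2)] :
        EuclideanSpace ℝ (Fin 4))
    + (gk * va * δ / 2) • (WithLp.toLp 2 ![q 1, -(q 0), -(q 3), q 2] : EuclideanSpace ℝ (Fin 4))

theorem Convex.eq_of_hasDerivWithinAt_zero {G : Type*} [NormedAddCommGroup G] [NormedSpace ℝ G]
    {s : Set ℝ} (hs : Convex ℝ s) {f : ℝ → G} (hf : ∀ t ∈ s, HasDerivWithinAt f 0 s t)
    {x y : ℝ} (hx : x ∈ s) (hy : y ∈ s) : f x = f y := by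
  have h := hs.norm_image_sub_le_of_norm_hasDerivWithin_le hf (fun _ _ => norm_zero.le) hy hx
  rw [zero_mul, norm_le_zero_iff, sub_eq_zero] at h
  exact h

theorem Convex.norm_eq_of_inner_hasDerivWithinAt_eq_zero {F : Type*} [NormedAddCommGroup F]
    [InnerProductSpace ℝ F] {s : Set ℝ} (hs : Convex ℝ s) {f f' : ℝ → F}
    (hf : ∀ t ∈ s, HasDerivWithinAt f (f' t) s t) (horth : ∀ t ∈ s, inner ℝ (f t) (f' t) = 0)
    {x y : ℝ} (hx : x ∈ s) (hy : y ∈ s) : ‖f x‖ = ‖f y‖ := by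
  have hsq : ∀ t ∈ s, HasDerivWithinAt (‖f ·‖ ^ 2) 0 s t := fun t ht => by
    simpa [horth t ht] using (hf t ht).norm_sq
  exact (sq_eq_sq₀ (norm_nonneg _) (norm_nonneg _)).1 (hs.eq_of_hasDerivWithinAt_zero hsq hx hy)

-- Each summand of `kitePhi` is orthogonal to `q`: the first and third are `q` under a
-- skew-symmetric matrix, and the second pairs with `q` to `(q₀² + q₁²)(q₂² + q₃²)` minus itself.
theorem inner_kitePhi_eq_zero (E vw gk δ l ldot : ℝ) (q : EuclideanSpace ℝ (Fin 4)) :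
    inner ℝ q (kitePhi E vw gk δ l ldot q) = 0 := by
  simp only [kitePhi, inner_add_right, inner_smul_right, PiLp.inner_apply, Fin.sum_univ_four,
    RCLike.inner_apply, conj_trivial, Matrix.cons_val_zero, Matrix.cons_val_one,
    Matrix.cons_val_two, Matrix.cons_val_three, Matrix.head_cons, Matrix.tail_cons]
  ring

theorem kite_quaternion_norm_constant_general (E vw gk : ℝ) (I : Set ℝ) (hI : Convex ℝ I)
    (q : ℝ → EuclideanSpace ℝ (Fin 4)) (l δ ldot : ℝ → ℝ)
    (hq : ∀ t ∈ I,
      HasDerivWithinAt q (kitePhi E vw gk (δ t) (l t) (ldot t) (q t)) I t) :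
    ∀ s ∈ I, ∀ t ∈ I, ‖q s‖ = ‖q t‖ := fun _ hs _ ht =>
  hI.norm_eq_of_inner_hasDerivWithinAt_eq_zero hq
    (fun t _ => inner_kitePhi_eq_zero E vw gk (δ t) (l t) (ldot t) (q t)) hs ht

/-- Along any solution of the quaternion kite equations of motion, the Euclidean
norm of the quaternion state is constant. -/
theorem kite_quaternion_norm_constant (E vw gk : ℝ) (I : Set ℝ) (hI : Convex ℝ I)
    (q : ℝ → EuclideanSpace ℝ (Fin 4)) (l δ ldot : ℝ → ℝ)
    (hl : ∀ t ∈ I, l t ≠ 0)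
    (hlde : ∀ t ∈ I, HasDerivWithinAt l (ldot t) I t)
    (hq : ∀ t ∈ I,
      HasDerivWithinAt q (kitePhi E vw gk (δ t) (l t) (ldot t) (q t)) I t) :
    ∀ s ∈ I, ∀ t ∈ I, ‖q s‖ = ‖q t‖ :=
  kite_quaternion_norm_constant_general E vw gk I hI q l δ ldot hq
end

section
/- Let γ > 0 and let q : I → ℝ⁴ be differentiable and satisfy the norm-stabilized equations q̇(t) = Φ(q(t)) − γ·(‖q(t)‖² − 1)·q(t), where Φ is the kite quaternion vector field (with possibly time-varying parameters δ(t), l(t) ≠ 0, l̇(t)). Then the function n(t) = ‖q(t)‖² satisfies the scalar differential equation ṅ(t) = −2γ·n(t)·(n(t) − 1). -/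
open RealInnerProductSpace

/-! The kite vector field is tangent to the spheres `‖q‖ = const`, so only the damping term
changes `‖q‖²`: if `q̇ = Φ(q) - c q` with `⟪Φ(q), q⟫ = 0`, then `d/dt ‖q‖² = 2⟪q, q̇⟫ = -2c‖q‖²`.
With `c = γ(‖q‖² - 1)` this is the logistic-type equation for `n = ‖q‖²`. -/

theorem inner_self_kitePhi (E vw gk δ l ldot : ℝ) (q : EuclideanSpace ℝ (Fin 4)) :
    ⟪q, kitePhi E vw gk δ l ldot q⟫ = 0 := by
  simp only [kitePhi, PiLp.inner_apply, RCLike.inner_apply, conj_trivial, PiLp.add_apply,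
    PiLp.smul_apply, smul_eq_mul, Fin.sum_univ_four, Matrix.cons_val_zero,
    Matrix.cons_val_one, Matrix.cons_val_two, Matrix.cons_val_three, Matrix.head_cons,
    Matrix.tail_cons]
  ring

theorem HasDerivWithinAt.norm_sq_of_tangent_sub_smul {F : Type*} [NormedAddCommGroup F]
    [InnerProductSpace ℝ F] {f : ℝ → F} {v : F} {c : ℝ} {s : Set ℝ} {t : ℝ}
    (hv : ⟪f t, v⟫ = 0) (hf : HasDerivWithinAt f (v - c • f t) s t) :
    HasDerivWithinAt (‖f ·‖ ^ 2) (-2 * c * ‖f t‖ ^ 2) s t := by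
  refine hf.norm_sq.congr_deriv ?_
  rw [inner_sub_right, hv, real_inner_smul_right, real_inner_self_eq_norm_sq]
  ring

theorem kite_stabilized_norm_ode_general (E vw gk γ : ℝ) (I : Set ℝ)
    (q : ℝ → EuclideanSpace ℝ (Fin 4)) (l δ ldot : ℝ → ℝ)
    (hq : ∀ t ∈ I, HasDerivWithinAt q
      (kitePhi E vw gk (δ t) (l t) (ldot t) (q t)
        - (γ * (‖q t‖ ^ 2 - 1)) • q t) I t) :
    ∀ t ∈ I, HasDerivWithinAt (fun s => ‖q s‖ ^ 2)
      (-2 * γ * ‖q t‖ ^ 2 * (‖q t‖ ^ 2 - 1)) I t := by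
  intro t ht
  exact ((hq t ht).norm_sq_of_tangent_sub_smul (inner_self_kitePhi ..)).congr_deriv (by ring)

/-- Under the norm-stabilized kite dynamics, `n(t) = ‖q(t)‖²` satisfies the scalar
ODE `ṅ = -2γ n (n - 1)`. -/
theorem kite_stabilized_norm_ode (E vw gk γ : ℝ) (hγ : 0 < γ) (I : Set ℝ)
    (q : ℝ → EuclideanSpace ℝ (Fin 4)) (l δ ldot : ℝ → ℝ)
    (hl : ∀ t ∈ I, l t ≠ 0)
    (hq : ∀ t ∈ I, HasDerivWithinAt q
      (kitePhi E vw gk (δ t) (l t) (ldot t) (q t)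
        - (γ * (‖q t‖ ^ 2 - 1)) • q t) I t) :
    ∀ t ∈ I, HasDerivWithinAt (fun s => ‖q s‖ ^ 2)
      (-2 * γ * ‖q t‖ ^ 2 * (‖q t‖ ^ 2 - 1)) I t :=
  kite_stabilized_norm_ode_general E vw gk γ I q l δ ldot hq
end

section
/- Let R be a 3×3 real orthogonal matrix (Rᵀ·R = I), let E, v_w, l̇ ∈ ℝ, set v_pitch = −v_w·⟨R·e_y, e_x⟩ and v_roll = v_w·⟨R·(E·e_x − e_z), e_x⟩ − E·l̇, and let v⃗_a = v_w·e_x − v_pitch·e_pitch − v_roll·e_roll + l̇·e_yaw with e_roll = −R·e_z, e_pitch = −R·e_y, e_yaw = −R·e_x. Then the scalar air path speed v_a := −⟨e_roll, v⃗_a⟩ = ⟨R·e_z, v⃗_a⟩ satisfies v_a = E·v_w·⟨R·e_x, e_x⟩ − E·l̇. -/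
open Matrix

/-- With the aerodynamic conditions in force, the scalar air path speed
`v_a = −⟨e_roll, v⃗_a⟩ = ⟨R e_z, v⃗_a⟩` equals `E·v_w·⟨R e_x, e_x⟩ − E·l̇`. -/
theorem air_path_speed_formula (R : Matrix (Fin 3) (Fin 3) ℝ) (hR : Rᵀ * R = 1)
    (E vw ldot : ℝ) :
    let ex : Fin 3 → ℝ := ![1, 0, 0]
    let ey : Fin 3 → ℝ := ![0, 1, 0]
    let ez : Fin 3 → ℝ := ![0, 0, 1]
    let eroll := -(R.mulVec ez)
    let epitch := -(R.mulVec ey)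
    let eyaw := -(R.mulVec ex)
    let vpitch := -vw * (R.mulVec ey ⬝ᵥ ex)
    let vroll := vw * (R.mulVec (E • ex - ez) ⬝ᵥ ex) - E * ldot
    let va := vw • ex - vpitch • epitch - vroll • eroll + ldot • eyaw
    (-(eroll ⬝ᵥ va) = E * vw * (R.mulVec ex ⬝ᵥ ex) - E * ldot ∧
      -(eroll ⬝ᵥ va) = R.mulVec ez ⬝ᵥ va) := by
  intro ex ey ez eroll epitch eyaw vpitch vroll va
  have key : ∀ u v : Fin 3 → ℝ, R *ᵥ u ⬝ᵥ (R *ᵥ v) = u ⬝ᵥ v := by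
    intro u v
    rw [← Matrix.vecMul_transpose, ← Matrix.dotProduct_mulVec, Matrix.mulVec_mulVec, hR,
      Matrix.one_mulVec]
  have hzz : R *ᵥ ez ⬝ᵥ (R *ᵥ ez) = 1 := by
    rw [key]; simp [ez, dotProduct, Fin.sum_univ_three]
  have hzy : R *ᵥ ez ⬝ᵥ (R *ᵥ ey) = 0 := by
    rw [key]; simp [ez, ey, dotProduct, Fin.sum_univ_three]
  have hzx : R *ᵥ ez ⬝ᵥ (R *ᵥ ex) = 0 := by
    rw [key]; simp [ez, ex, dotProduct, Fin.sum_univ_three]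
  have hmain : eroll ⬝ᵥ va = -(E * vw * (R.mulVec ex ⬝ᵥ ex) - E * ldot) := by
    simp only [eroll, va, vpitch, vroll, epitch, eyaw,
      Matrix.mulVec_sub, Matrix.mulVec_smul,
      dotProduct_add, dotProduct_sub, dotProduct_smul,
      neg_dotProduct, dotProduct_neg, sub_dotProduct,
      smul_dotProduct, smul_eq_mul, hzz, hzy, hzx]
    ring
  constructor
  · rw [hmain]; ring
  · rw [hmain]
    have : R *ᵥ ez ⬝ᵥ va = -(eroll ⬝ᵥ va) := by
      simp [eroll, neg_dotProduct]
    rw [this, hmain]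
end

section
/- Let q = (q0,q1,q2,q3) ∈ ℝ⁴ with q0² + q1² + q2² + q3² = 1, let E, v_w, g_k, δ, l̇ ∈ ℝ and l ≠ 0, and set v_a = E·v_w·(q0²+q1²−q2²−q3²) − E·l̇. Define the body-frame turn rates ω_roll = −(2·v_w/l)·(q1q2 − q0q3), ω_pitch = −(v_w/l)·(E·(q0²+q1²−q2²−q3²) − 2(q1q3 + q0q2)) + E·l̇/l, and ω_yaw = g_k·v_a·δ. Then the quaternion kinematic equation q̇ = ½·M·q, with M the matrix with rows (0, ω_yaw, ω_pitch, ω_roll), (−ω_yaw, 0, −ω_roll, ω_pitch), (−ω_pitch, ω_roll, 0, −ω_yaw), (−ω_roll, −ω_pitch, ω_yaw, 0), evaluates exactly to the kite equations of motion: ½·M·q = (v_a/(2l))·(−q2, −q3, q0, q1) + (v_w/l)·(q0(q2²+q3²), q1(q2²+q3²), −q2(q0²+q1²), −q3(q0²+q1²)) + (g_k·v_a·δ/2)·(q1, −q0, −q3, q2). -/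
/-!
In quaternion notation `q = q₀ + q₁i + q₂j + q₃k` the turn-rate matrix acts by right
multiplication, `M q = -q·(ω_yaw i + ω_pitch j + ω_roll k)`. Writing
`ω_pitch = -v_a/l + (v_w/l)·R₁₃` and `ω_roll = -(v_w/l)·R₁₂` splits `½ M q` into the air-speed
term along `q·j`, the steering term along `q·i`, and `(v_w/l)·(½R₁₂·q·k - ½R₁₃·q·j)`, whose
coordinates are the cubic terms of the kite equations.
-/

open Matrix

/-- The matrix of the quaternion attitude kinematics `q̇ = ½ M q`. -/
def kiteOmegaMatrix (ωroll ωpitch ωyaw : ℝ) : Matrix (Fin 4) (Fin 4) ℝ :=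
  !![0, ωyaw, ωpitch, ωroll;
     -ωyaw, 0, -ωroll, ωpitch;
     -ωpitch, ωroll, 0, -ωyaw;
     -ωroll, -ωpitch, ωyaw, 0]

section QuaternionProducts

variable (q : EuclideanSpace ℝ (Fin 4))

/- Coordinates of `q·i`, `q·j` and `q·k` for `q = q₀ + q₁i + q₂j + q₃k`. -/
def quatMulI : EuclideanSpace ℝ (Fin 4) := WithLp.toLp 2 ![-(q 1), q 0, q 3, -(q 2)]

def quatMulJ : EuclideanSpace ℝ (Fin 4) := WithLp.toLp 2 ![-(q 2), -(q 3), q 0, q 1]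

def quatMulK : EuclideanSpace ℝ (Fin 4) := WithLp.toLp 2 ![-(q 3), q 2, -(q 1), q 0]

theorem neg_quatMulI : -quatMulI q = WithLp.toLp 2 ![q 1, -(q 0), -(q 3), q 2] := by
  ext i
  fin_cases i <;> simp [quatMulI]

theorem smul_quatMulK_sub_smul_quatMulJ :
    (q 1 * q 2 - q 0 * q 3) • quatMulK q - (q 1 * q 3 + q 0 * q 2) • quatMulJ q =
      WithLp.toLp 2 ![q 0 * (q 2 ^ 2 + q 3 ^ 2), q 1 * (q 2 ^ 2 + q 3 ^ 2),
        -(q 2) * (q 0 ^ 2 + q 1 ^ 2), -(q 3) * (q 0 ^ 2 + q 1 ^ 2)] := by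
  ext i
  fin_cases i <;> simp [quatMulJ, quatMulK] <;> ring

theorem kiteOmegaMatrix_mulVec (ωroll ωpitch ωyaw : ℝ) :
    (WithLp.toLp 2 ((kiteOmegaMatrix ωroll ωpitch ωyaw).mulVec q) : EuclideanSpace ℝ (Fin 4)) =
      -(ωyaw • quatMulI q + ωpitch • quatMulJ q + ωroll • quatMulK q) := by
  ext i
  fin_cases i <;>
    simp [kiteOmegaMatrix, quatMulI, quatMulJ, quatMulK, Matrix.mulVec, dotProduct,
      Fin.sum_univ_four] <;>
    ring

theorem kitePhi_eq (E vw gk δ l ldot : ℝ) :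
    kitePhi E vw gk δ l ldot q =
      let va := E * vw * (q 0 ^ 2 + q 1 ^ 2 - q 2 ^ 2 - q 3 ^ 2) - E * ldot
      (va / (2 * l)) • quatMulJ q
        + (vw / l) • ((q 1 * q 2 - q 0 * q 3) • quatMulK q
          - (q 1 * q 3 + q 0 * q 2) • quatMulJ q)
        - (gk * va * δ / 2) • quatMulI q := by
  rw [smul_quatMulK_sub_smul_quatMulJ, sub_eq_add_neg, ← smul_neg, neg_quatMulI]
  rfl

end QuaternionProducts

theorem kite_kinematics_eval_general (q : EuclideanSpace ℝ (Fin 4))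
    (E vw gk δ ldot l : ℝ) :
    let va := E * vw * (q 0 ^ 2 + q 1 ^ 2 - q 2 ^ 2 - q 3 ^ 2) - E * ldot
    let ωroll := -(2 * vw / l) * (q 1 * q 2 - q 0 * q 3)
    let ωpitch := -(vw / l) * (E * (q 0 ^ 2 + q 1 ^ 2 - q 2 ^ 2 - q 3 ^ 2)
        - 2 * (q 1 * q 3 + q 0 * q 2)) + E * ldot / l
    let ωyaw := gk * va * δ
    ((1 / 2 : ℝ) • (WithLp.toLp 2 ((kiteOmegaMatrix ωroll ωpitch ωyaw).mulVec q) :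
        EuclideanSpace ℝ (Fin 4)) = kitePhi E vw gk δ l ldot q) := by
  intro va ωroll ωpitch ωyaw
  have hpitch : ωpitch = -(va / l) + 2 * (vw / l) * (q 1 * q 3 + q 0 * q 2) := by
    simp only [ωpitch, va]
    ring
  have hroll : ωroll = -(2 * (vw / l)) * (q 1 * q 2 - q 0 * q 3) := by
    simp only [ωroll]
    ring
  rw [kiteOmegaMatrix_mulVec, kitePhi_eq, hpitch, hroll]
  module

/-- For a unit quaternion, the kinematic equation `½ M q` with the aerodynamic turn
rates evaluates exactly to the kite equations of motion. -/
theorem kite_kinematics_eval (q : EuclideanSpace ℝ (Fin 4))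
    (hq : q 0 ^ 2 + q 1 ^ 2 + q 2 ^ 2 + q 3 ^ 2 = 1)
    (E vw gk δ ldot l : ℝ) (hl : l ≠ 0) :
    let va := E * vw * (q 0 ^ 2 + q 1 ^ 2 - q 2 ^ 2 - q 3 ^ 2) - E * ldot
    let ωroll := -(2 * vw / l) * (q 1 * q 2 - q 0 * q 3)
    let ωpitch := -(vw / l) * (E * (q 0 ^ 2 + q 1 ^ 2 - q 2 ^ 2 - q 3 ^ 2)
        - 2 * (q 1 * q 3 + q 0 * q 2)) + E * ldot / l
    let ωyaw := gk * va * δ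
    ((1 / 2 : ℝ) • (WithLp.toLp 2 ((kiteOmegaMatrix ωroll ωpitch ωyaw).mulVec q) :
        EuclideanSpace ℝ (Fin 4)) = kitePhi E vw gk δ l ldot q) :=
  kite_kinematics_eval_general q E vw gk δ ldot l
end

section
/- Wind-speed scaling invariance: let E, g_k ∈ ℝ and v_w > 0. Suppose q : ℝ → ℝ⁴ and l : ℝ → ℝ are differentiable, l(t) ≠ 0 for all t, and (q, l) solves the quaternion kite equations of motion with wind speed 1, steering δ(t) and winch speed l̇(t) = u(t). Then the time-rescaled functions q̃(t) = q(v_w·t), l̃(t) = l(v_w·t) solve the quaternion kite equations of motion with wind speed v_w, steering δ̃(t) = δ(v_w·t), and winch speed l̃̇(t) = v_w·u(v_w·t). (Hence solutions for different wind speeds are obtained by scaling the time axis proportionally to 1/v_w when the winch speed is defined relative to the wind speed.) -/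
theorem HasDerivAt.comp_const_mul {𝕜 F : Type*} [NontriviallyNormedField 𝕜]
    [NormedAddCommGroup F] [NormedSpace 𝕜 F] {f : 𝕜 → F} {f' : F} {c t : 𝕜}
    (hf : HasDerivAt f f' (c * t)) : HasDerivAt (fun s => f (c * s)) (c • f') t := by
  simpa [Function.comp_def] using hf.scomp t ((hasDerivAt_id t).const_mul c)

theorem kitePhi_eq_smul_kitePhi_one (E gk vw δ l u : ℝ) (q : EuclideanSpace ℝ (Fin 4)) :
    kitePhi E vw gk δ l (vw * u) q = vw • kitePhi E 1 gk δ l u q := by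
  ext i
  fin_cases i <;>
  · simp only [kitePhi, Fin.isValue, Fin.zero_eta, Fin.mk_one, Fin.reduceFinMk, PiLp.add_apply,
      PiLp.smul_apply, Matrix.cons_val, Matrix.cons_val_zero, Matrix.cons_val_one, smul_eq_mul]
    ring

theorem kite_wind_scaling_general (E gk vw : ℝ)
    (q : ℝ → EuclideanSpace ℝ (Fin 4)) (l δ u : ℝ → ℝ)
    (hq : ∀ t, HasDerivAt q (kitePhi E 1 gk (δ t) (l t) (u t) (q t)) t)
    (hld : ∀ t, HasDerivAt l (u t) t) :
    (∀ t, HasDerivAt (fun s => q (vw * s))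
        (kitePhi E vw gk (δ (vw * t)) (l (vw * t)) (vw * u (vw * t))
          (q (vw * t))) t) ∧
    (∀ t, HasDerivAt (fun s => l (vw * s)) (vw * u (vw * t)) t) := by
  refine ⟨fun t => ?_, fun t => (hld (vw * t)).comp_const_mul⟩
  rw [kitePhi_eq_smul_kitePhi_one]
  exact (hq (vw * t)).comp_const_mul

/-- Wind-speed scaling invariance: solutions of the kite equations of motion for wind
speed `v_w` are obtained from solutions for wind speed `1` by rescaling the time axis
proportionally to `1/v_w`. -/
theorem kite_wind_scaling (E gk vw : ℝ) (hvw : 0 < vw)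
    (q : ℝ → EuclideanSpace ℝ (Fin 4)) (l δ u : ℝ → ℝ)
    (hl : ∀ t, l t ≠ 0)
    (hq : ∀ t, HasDerivAt q (kitePhi E 1 gk (δ t) (l t) (u t) (q t)) t)
    (hld : ∀ t, HasDerivAt l (u t) t) :
    (∀ t, HasDerivAt (fun s => q (vw * s))
        (kitePhi E vw gk (δ (vw * t)) (l (vw * t)) (vw * u (vw * t))
          (q (vw * t))) t) ∧
    (∀ t, HasDerivAt (fun s => l (vw * s)) (vw * u (vw * t)) t) :=
  kite_wind_scaling_general E gk vw q l δ u hq hld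
end
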